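/- arXiv:0804.0006 — 8 statements merged into one kernel-verified Lean document; each statement's English description precedes it below -/
import Mathlib

section
/- For every nonzero ι ∈ F^m and every word z ∈ F^n, the neighborhood of the coset R_ι + z equals the neighborhood of the coset R_ι + z + e^(ι); that is, Ω(R_ι + z) = Ω(R_ι + z + e^(ι)). -/
/-- `F^m`: binary words of length `m`, i.e. the vector space `(Fin m → ZMod 2)` over GF(2). -/
abbrev Fm (m : ℕ) := Fin m → ZMod 2

/-- Index set for `F^n` with `n = 2^m - 1`: the nonzero vectors of `F^m`. -/
abbrev Idx (m : ℕ) := {v : Fm m // v ≠ 0}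

/-- `F^n`: binary words of length `n = 2^m - 1`, with coordinates indexed by
nonzero vectors of `F^m`. -/
abbrev Fn (m : ℕ) := Idx m → ZMod 2

/-- The coordinate of `c : F^n` at index `α : F^m` (junk value `0` when `α = 0`,
which is never used since coordinates are only ever accessed at nonzero indices). -/
def coord {m : ℕ} (c : Fn m) (α : Fm m) : ZMod 2 :=
  if h : α = 0 then 0 else c ⟨α, h⟩

/-- `e^(ι)`: the word of `F^n` with `1` in coordinate `ι` and `0` elsewhere. -/
def eWord {m : ℕ} (ι : Idx m) : Fn m := fun κ => if κ = ι then 1 else 0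

/-- `ẑα = (α, 0^{n-m})`: the word of `F^n` whose coordinate at index `κ` equals `α i`
if `κ = π^(i)` is the `i`-th standard basis vector `Pi.single i 1`, and `0` otherwise. -/
def zhat {m : ℕ} (α : Fm m) : Fn m :=
  fun κ => ∑ i : Fin m, if (κ : Fm m) = Pi.single i 1 then α i else 0

/-- The Hamming code `H = {c ∈ F^n : ∑_{ι ≠ 0} c_ι • ι = 0}`. -/
def hammingCode (m : ℕ) : Set (Fn m) :=
  {c | ∑ ι : Idx m, c ι • (ι : Fm m) = 0}

/-- The linear `ι`-component `R_ι = {c ∈ H : c_α = c_{α+ι} ∀ α ∉ {0, ι}}`. -/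
def Rcomp {m : ℕ} (ι : Idx m) : Set (Fn m) :=
  {c | c ∈ hammingCode m ∧
    ∀ α : Fm m, α ≠ 0 → α ≠ (ι : Fm m) → coord c α = coord c (α + ι)}

/-- The coset `M + z = {c + z : c ∈ M}`. -/
def coset {m : ℕ} (M : Set (Fn m)) (z : Fn m) : Set (Fn m) := (fun c => c + z) '' M

/-- The neighborhood `Ω(M)` of `M ⊆ F^n`: all words at Hamming distance at most 1 from `M`. -/
def nbhd {m : ℕ} (M : Set (Fn m)) : Set (Fn m) :=
  {x | ∃ c ∈ M, hammingDist x c ≤ 1}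

/-- A `1`-code: any two distinct elements are at Hamming distance at least 3. -/
def IsOneCode {ι : Type*} [Fintype ι] (C : Set (ι → ZMod 2)) : Prop :=
  ∀ x ∈ C, ∀ y ∈ C, x ≠ y → 3 ≤ hammingDist x y

/-- A `1`-perfect code in `F^n`: a `1`-code whose radius-1 balls cover all of `F^n`. -/
def IsOnePerfect {m : ℕ} (P : Set (Fn m)) : Prop :=
  IsOneCode P ∧ ∀ x : Fn m, ∃ c ∈ P, hammingDist x c ≤ 1

/-- In characteristic 2, the sum of two distinct vectors is nonzero. -/
lemma add_ne_zero_of_ne' {m : ℕ} {ι κ : Fm m} (h : ι ≠ κ) : ι + κ ≠ 0 := by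
  intro h0
  apply h
  funext i
  have h1 := congrFun h0 i
  have key : ∀ a b : ZMod 2, a + b = 0 → a = b := by decide
  exact key _ _ h1

lemma zmod2_add_self (a : ZMod 2) : a + a = 0 := by revert a; decide

lemma fm_add_self {m : ℕ} (v : Fm m) : v + v = 0 :=
  funext fun i => zmod2_add_self (v i)

lemma eWord_add_self {m : ℕ} (κ : Idx m) : eWord κ + eWord κ = 0 :=
  funext fun i => zmod2_add_self _

lemma fn_add_self {m : ℕ} (v : Fn m) : v + v = 0 :=
  funext fun i => zmod2_add_self _

lemma dist_add_eWord_le {m : ℕ} (a : Fn m) (κ : Idx m) :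
    hammingDist (a + eWord κ) a ≤ 1 := by
  have h : (Finset.univ.filter fun i => (a + eWord κ) i ≠ a i) ⊆ {κ} := by
    intro i hi
    simp only [Finset.mem_filter, Finset.mem_univ, true_and] at hi
    simp only [Finset.mem_singleton]
    by_contra hne
    apply hi
    simp [eWord, Pi.add_apply, hne]
  calc hammingDist (a + eWord κ) a
      = (Finset.univ.filter fun i => (a + eWord κ) i ≠ a i).card := rfl
    _ ≤ ({κ} : Finset (Idx m)).card := Finset.card_le_card h
    _ = 1 := Finset.card_singleton κ

lemma dist_le_one {m : ℕ} {x c : Fn m} (h : hammingDist x c ≤ 1) :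
    x = c ∨ ∃ κ : Idx m, x = c + eWord κ := by
  set s := Finset.univ.filter fun i => x i ≠ c i with hs
  have hcard : s.card ≤ 1 := h
  interval_cases hd : s.card
  · left
    have hse : s = ∅ := Finset.card_eq_zero.mp hd
    funext i
    by_contra hne
    have : i ∈ s := by simp [hs, hne]
    simp [hse] at this
  · right
    obtain ⟨κ, hκ⟩ := Finset.card_eq_one.mp hd
    refine ⟨κ, funext fun i => ?_⟩
    by_cases hi : i = κ
    · subst hi
      have hmem : i ∈ s := by rw [hκ]; simp
      simp only [hs, Finset.mem_filter, Finset.mem_univ, true_and] at hmem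
      have key : ∀ a b : ZMod 2, a ≠ b → a = b + 1 := by decide
      simpa [eWord, Pi.add_apply] using key _ _ hmem
    · have hmem : i ∉ s := by rw [hκ]; simpa using hi
      simp only [hs, Finset.mem_filter, Finset.mem_univ, true_and, not_not] at hmem
      simp [eWord, Pi.add_apply, hi, hmem]

lemma synd_add {m : ℕ} (c d : Fn m) :
    ∑ α : Idx m, (c + d) α • (α : Fm m)
      = (∑ α : Idx m, c α • (α : Fm m)) + ∑ α : Idx m, d α • (α : Fm m) := by
  rw [← Finset.sum_add_distrib]
  simp [add_smul]

lemma synd_eWord {m : ℕ} (κ : Idx m) :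
    ∑ α : Idx m, eWord κ α • (α : Fm m) = (κ : Fm m) := by
  rw [Finset.sum_eq_single κ]
  · simp [eWord]
  · intro b _ hb
    simp [eWord, hb]
  · intro h
    exact absurd (Finset.mem_univ κ) h

lemma coord_add {m : ℕ} (c d : Fn m) (α : Fm m) :
    coord (c + d) α = coord c α + coord d α := by
  unfold coord
  split <;> simp

lemma coord_eWord {m : ℕ} (κ : Idx m) (α : Fm m) :
    coord (eWord κ) α = if α = (κ : Fm m) then 1 else 0 := by
  unfold coord eWord
  split
  · next h =>
    subst h
    rw [if_neg (Ne.symm κ.2)]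
  · next h =>
    simp [Subtype.ext_iff]

lemma mem_Rcomp_shift {m : ℕ} (ι κ : Idx m) (hκι : (κ : Fm m) ≠ (ι : Fm m))
    {c : Fn m} (hc : c ∈ Rcomp ι) :
    c + eWord κ + eWord ⟨(κ : Fm m) + (ι : Fm m), add_ne_zero_of_ne' hκι⟩ + eWord ι
      ∈ Rcomp ι := by
  obtain ⟨hH, hR⟩ := hc
  set lam : Idx m := ⟨(κ : Fm m) + (ι : Fm m), add_ne_zero_of_ne' hκι⟩ with hlam
  constructor
  · show ∑ α : Idx m, _ • (α : Fm m) = 0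
    rw [synd_add, synd_add, synd_add, hH, synd_eWord, synd_eWord, synd_eWord]
    have key : ∀ a b : ZMod 2, 0 + a + (a + b) + b = 0 := by decide
    funext i
    exact key _ _
  · intro α hα0 hαι
    have hlv : (lam : Fm m) = (κ : Fm m) + (ι : Fm m) := rfl
    have hαι' : α + (ι : Fm m) ≠ (ι : Fm m) := by
      intro h
      apply hα0
      have := congrArg (· + (ι : Fm m)) h
      simp only [add_assoc, fm_add_self, add_zero] at this
      exact this
    have hαι0 : α + (ι : Fm m) ≠ 0 := by
      intro h
      apply hαι
      have := congrArg (· + (ι : Fm m)) h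
      simp only [add_assoc, fm_add_self, add_zero, zero_add] at this
      exact this
    have h1 : (α = (κ : Fm m)) = (α + (ι : Fm m) = (κ : Fm m) + (ι : Fm m)) := by
      simp [add_left_inj]
    have h2 : (α = (κ : Fm m) + (ι : Fm m)) = (α + (ι : Fm m) = (κ : Fm m)) := by
      apply propext
      constructor <;> intro h
      · rw [h, add_assoc, fm_add_self, add_zero]
      · rw [← h, add_assoc, fm_add_self, add_zero]
    rw [coord_add, coord_add, coord_add, coord_add, coord_add, coord_add,
        coord_eWord, coord_eWord, coord_eWord, coord_eWord, coord_eWord, coord_eWord,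
        hR α hα0 hαι, if_neg hαι, if_neg hαι']
    simp only [hlv, h1, h2]
    ring

lemma nbhd_step {m : ℕ} (ι : Idx m) (z x : Fn m)
    (hx : x ∈ nbhd (coset (Rcomp ι) z)) :
    x ∈ nbhd (coset (Rcomp ι) (z + eWord ι)) := by
  obtain ⟨y, ⟨c, hc, rfl⟩, hd⟩ := hx
  rcases dist_le_one hd with h | ⟨κ, h⟩
  · refine ⟨c + (z + eWord ι), ⟨c, hc, rfl⟩, ?_⟩
    subst h
    have : c + (z + eWord ι) = (c + z) + eWord ι := by ring
    rw [this]
    rw [hammingDist_comm]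
    exact dist_add_eWord_le _ ι
  · by_cases hk : κ = ι
    · subst hk
      refine ⟨c + (z + eWord κ), ⟨c, hc, rfl⟩, ?_⟩
      subst h
      have : c + (z + eWord κ) = c + z + eWord κ := by ring
      rw [this]
      simp
    · have hv : (κ : Fm m) ≠ (ι : Fm m) := fun h' => hk (Subtype.ext h')
      set lam : Idx m := ⟨(κ : Fm m) + (ι : Fm m), add_ne_zero_of_ne' hv⟩ with hlam
      refine ⟨(c + eWord κ + eWord lam + eWord ι) + (z + eWord ι),
        ⟨_, mem_Rcomp_shift ι κ hv hc, rfl⟩, ?_⟩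
      subst h
      have heq : (c + eWord κ + eWord lam + eWord ι) + (z + eWord ι)
          = (c + z + eWord κ) + eWord lam := by
        have h2 : eWord ι + eWord ι = 0 := eWord_add_self ι
        calc (c + eWord κ + eWord lam + eWord ι) + (z + eWord ι)
            = (c + z + eWord κ) + eWord lam + (eWord ι + eWord ι) := by ring
          _ = (c + z + eWord κ) + eWord lam := by rw [h2, add_zero]
      rw [heq, hammingDist_comm]
      exact dist_add_eWord_le _ lam

/-- For every nonzero `ι ∈ F^m` and every `z ∈ F^n`,
`Ω(R_ι + z) = Ω(R_ι + z + e^(ι))`. -/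
theorem stmt0 (m : ℕ) (hm : 1 ≤ m) (ι : Idx m) (z : Fn m) :
    nbhd (coset (Rcomp ι) z) = nbhd (coset (Rcomp ι) (z + eWord ι)) := by
  ext x
  constructor
  · exact nbhd_step ι z x
  · intro hx
    have := nbhd_step ι (z + eWord ι) x hx
    rwa [add_assoc, eWord_add_self, add_zero] at this
end

section
/- Let ι, κ ∈ F^m each have Hamming weight at least 3 and satisfy d(ι, κ) ≥ 3. Then the word ẑι + e^(ι) + ẑκ + e^(κ) does not belong to the linear span (over GF(2)) of R_ι ∪ R_κ. -/
/-!
Pick a coordinate `i` where `ι` and `κ` differ and put `β = π^(i)`. The parity of a word on the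
affine plane `β + ⟨ι, κ⟩` is a linear functional vanishing on `R_ι` and on `R_κ`, since each of
them takes equal values on the pairs of points of the plane differing by `ι` (resp. `κ`).
The weight conditions keep `0, ι, κ, ι + κ` away from `β`, so the plane avoids `ι` and `κ`,
and `β` is its only standard basis vector; hence the parity of `ẑι + e^(ι) + ẑκ + e^(κ)` is
`ι_i + κ_i = 1`.
-/

lemma ZModModule.add_eq_iff_eq_add {G : Type*} [AddCommGroup G] [Module (ZMod 2) G] {x y z : G} :
    x + y = z ↔ x = z + y := by
  rw [← ZModModule.sub_eq_add z y, eq_sub_iff_add_eq]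

section HammingWeight

variable {n : Type*} [Fintype n]

lemma hammingNorm_single [DecidableEq n] {R : Type*} [Zero R] [DecidableEq R] (i : n) {a : R}
    (ha : a ≠ 0) :
    hammingNorm (Pi.single i a : n → R) = 1 := by
  rw [hammingNorm, Finset.card_eq_one]
  exact ⟨i, by ext j; by_cases hj : j = i <;> simp [hj, ha]⟩

lemma hammingNorm_le_add_hammingNorm_add (x w : n → ZMod 2) :
    hammingNorm w ≤ hammingNorm x + hammingNorm (x + w) := by
  simpa only [hammingDist_eq_hammingNorm, ZModModule.neg_eq_self, zero_add]
    using hammingDist_triangle 0 x w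

end HammingWeight

section Coordinates

variable {m : ℕ}

lemma coord_of_ne_zero (c : Fn m) {α : Fm m} (hα : α ≠ 0) : coord c α = c ⟨α, hα⟩ :=
  dif_neg hα

def coordLin (α : Fm m) : Fn m →ₗ[ZMod 2] ZMod 2 where
  toFun c := coord c α
  map_add' c c' := by unfold coord; split_ifs <;> simp
  map_smul' r c := by unfold coord; split_ifs <;> simp

lemma coord_zhat_single (α : Fm m) (i : Fin m) : coord (zhat α) (Pi.single i 1) = α i := by
  have hsingle : ∀ j, (Pi.single i 1 : Fm m) = Pi.single j 1 ↔ j = i := fun j =>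
    ⟨fun h => by_contra fun hji => by simpa [Ne.symm hji] using congrFun h i, fun h => h ▸ rfl⟩
  rw [coord_of_ne_zero _ (by simp)]
  simp [zhat, hsingle]

lemma coord_zhat_of_hammingNorm_ne_one (α : Fm m) {v : Fm m} (hv : hammingNorm v ≠ 1) :
    coord (zhat α) v = 0 := by
  unfold coord
  split_ifs with hv0
  · rfl
  · refine Finset.sum_eq_zero fun i _ => if_neg ?_
    rintro rfl
    exact hv (hammingNorm_single i (a := (1 : ZMod 2)) one_ne_zero)

lemma coord_eWord_of_ne (w : Idx m) {v : Fm m} (hv : v ≠ w) : coord (eWord w) v = 0 := by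
  unfold coord eWord
  split_ifs with h0 h
  · rfl
  · exact absurd (congrArg Subtype.val h) hv
  · rfl

end Coordinates

section PlaneParity

variable {m : ℕ}

def planeParity (β u v : Fm m) : Fn m →ₗ[ZMod 2] ZMod 2 :=
  coordLin β + coordLin (β + u) + coordLin (β + v) + coordLin (β + u + v)

lemma planeParity_apply (β u v : Fm m) (c : Fn m) :
    planeParity β u v c = coord c β + coord c (β + u) + coord c (β + v) + coord c (β + u + v) :=
  rfl

lemma planeParity_comm (β u v : Fm m) : planeParity β u v = planeParity β v u := by
  rw [planeParity, planeParity, add_right_comm β u v]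
  abel

lemma planeParity_eq_zero_of_mem_Rcomp {β v : Fm m} {ι : Idx m} {c : Fn m} (hc : c ∈ Rcomp ι)
    (h0 : β ≠ 0) (hι : β ≠ ι) (hv : β ≠ v) (hιv : β ≠ ι + v) : planeParity β ι v c = 0 := by
  have hβvι : β + v ≠ ι := by
    rwa [Ne, ZModModule.add_eq_iff_eq_add]
  have h₁ : coord c β = coord c (β + ι) := hc.2 β h0 hι
  have h₂ : coord c (β + v) = coord c (β + ι + v) := by
    rw [add_right_comm]
    exact hc.2 _ (add_ne_zero_of_ne' hv) hβvι
  rw [planeParity_apply, h₁, h₂, ZModModule.add_self, zero_add, ZModModule.add_self]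

lemma planeParity_eWord_left {β v : Fm m} {ι : Idx m}
    (h0 : β ≠ 0) (hι : β ≠ ι) (hv : β ≠ v) (hιv : β ≠ ι + v) :
    planeParity β ι v (eWord ι) = 0 := by
  have h₁ : β + ι ≠ ι := by rwa [Ne, add_eq_right]
  have h₂ : β + v ≠ ι := by rwa [Ne, ZModModule.add_eq_iff_eq_add]
  have h₃ : β + ι + v ≠ ι := by
    rwa [Ne, ZModModule.add_eq_iff_eq_add, ZModModule.add_eq_iff_eq_add, add_right_comm,
      ZModModule.add_self, zero_add]
  rw [planeParity_apply, coord_eWord_of_ne _ hι, coord_eWord_of_ne _ h₁,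
    coord_eWord_of_ne _ h₂, coord_eWord_of_ne _ h₃, add_zero, add_zero, add_zero]

lemma planeParity_single_zhat (α : Fm m) (i : Fin m) {u v : Fm m} (hu : 3 ≤ hammingNorm u)
    (hv : 3 ≤ hammingNorm v) (huv : 3 ≤ hammingNorm (u + v)) :
    planeParity (Pi.single i 1) u v (zhat α) = α i := by
  have off : ∀ w : Fm m, 3 ≤ hammingNorm w → coord (zhat α) (Pi.single i 1 + w) = 0 := by
    intro w hw
    refine coord_zhat_of_hammingNorm_ne_one α fun h => ?_
    have := hammingNorm_le_add_hammingNorm_add (Pi.single i 1) w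
    rw [h, hammingNorm_single i (a := (1 : ZMod 2)) one_ne_zero] at this
    omega
  rw [planeParity_apply, coord_zhat_single, off u hu, off v hv, add_assoc _ u, off _ huv]
  simp

end PlaneParity

theorem stmt3_general (m : ℕ) (ι κ : Idx m)
    (hι : 3 ≤ hammingDist (ι : Fm m) 0) (hκ : 3 ≤ hammingDist (κ : Fm m) 0)
    (hικ : 3 ≤ hammingDist (ι : Fm m) (κ : Fm m)) :
    zhat (ι : Fm m) + eWord ι + zhat (κ : Fm m) + eWord κ ∉
      Submodule.span (ZMod 2) (Rcomp ι ∪ Rcomp κ) := by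
  rw [hammingDist_zero_right] at hι hκ
  rw [hammingDist_eq_hammingNorm, ZModModule.neg_eq_self] at hικ
  have hκι : 3 ≤ hammingNorm ((κ : Fm m) + (ι : Fm m)) := add_comm (ι : Fm m) κ ▸ hικ
  obtain ⟨i, hi⟩ : ∃ i, (ι : Fm m) i ≠ (κ : Fm m) i := Function.ne_iff.mp fun h => by
    rw [h, ZModModule.add_self, hammingNorm_zero] at hικ
    omega
  set β : Fm m := Pi.single i 1
  have hβ0 : β ≠ 0 := by simp [β]
  have hβ : ∀ u : Fm m, 3 ≤ hammingNorm u → β ≠ u := fun u hu h => by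
    have hβ1 : hammingNorm β = 1 := hammingNorm_single i one_ne_zero
    rw [h] at hβ1
    omega
  have hspan : Submodule.span (ZMod 2) (Rcomp ι ∪ Rcomp κ) ≤ LinearMap.ker (planeParity β ι κ) :=
    Submodule.span_le.mpr <| Set.union_subset
      (fun c hc => planeParity_eq_zero_of_mem_Rcomp hc hβ0 (hβ _ hι) (hβ _ hκ) (hβ _ hικ))
      (fun c hc => by
        rw [SetLike.mem_coe, LinearMap.mem_ker, planeParity_comm]
        exact planeParity_eq_zero_of_mem_Rcomp hc hβ0 (hβ _ hκ) (hβ _ hι) (hβ _ hκι))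
  have hparity : planeParity β ι κ (zhat ι + eWord ι + zhat κ + eWord κ) = 1 := by
    rw [map_add, map_add, map_add, planeParity_single_zhat _ _ hι hκ hικ,
      planeParity_single_zhat _ _ hι hκ hικ,
      planeParity_eWord_left hβ0 (hβ _ hι) (hβ _ hκ) (hβ _ hικ), planeParity_comm,
      planeParity_eWord_left hβ0 (hβ _ hκ) (hβ _ hι) (hβ _ hκι), add_zero, add_zero]
    exact (by decide : ∀ a b : ZMod 2, a ≠ b → a + b = 1) _ _ hi
  intro hz
  exact one_ne_zero (hparity.symm.trans (LinearMap.mem_ker.mp (hspan hz)))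

/-- If `ι, κ ∈ F^m` each have Hamming weight at least 3 and `d(ι, κ) ≥ 3`, then
`ẑι + e^(ι) + ẑκ + e^(κ)` does not belong to the GF(2)-linear span of `R_ι ∪ R_κ`. -/
theorem stmt3 (m : ℕ) (hm : 1 ≤ m) (ι κ : Idx m)
    (hι : 3 ≤ hammingDist (ι : Fm m) 0) (hκ : 3 ≤ hammingDist (κ : Fm m) 0)
    (hικ : 3 ≤ hammingDist (ι : Fm m) (κ : Fm m)) :
    zhat (ι : Fm m) + eWord ι + zhat (κ : Fm m) + eWord κ ∉
      Submodule.span (ZMod 2) (Rcomp ι ∪ Rcomp κ) :=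
  stmt3_general m ι κ hι hκ hικ
end

section
/- Let ι, κ ∈ F^m each have Hamming weight at least 3 and satisfy d(ι, κ) ≥ 3 (in particular ι ≠ κ). Then the cosets R_ι + ẑι + e^(ι) and R_κ + ẑκ + e^(κ) are disjoint. -/
/- ### Auxiliary lemmas -/

lemma myadd_self {m : ℕ} (a : Fm m) : a + a = 0 := by
  funext i
  have : ∀ x : ZMod 2, x + x = 0 := by decide
  exact this _

lemma myshift {m : ℕ} {a b c : Fm m} (h : a + b = c) : a = c + b := by
  rw [← h, add_assoc, myadd_self, add_zero]

lemma norm_support {m : ℕ} {x : Fm m} (s : Finset (Fin m)) (h : ∀ i ∉ s, x i = 0) :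
    hammingNorm x ≤ s.card := by
  unfold hammingNorm
  apply Finset.card_le_card
  intro i hi
  simp only [Finset.mem_filter] at hi
  by_contra hns
  exact hi.2 (h i hns)

lemma norm_single_le {m : ℕ} (i : Fin m) : hammingNorm (Pi.single i 1 : Fm m) ≤ 1 := by
  have h : ∀ j ∉ ({i} : Finset (Fin m)), (Pi.single i 1 : Fm m) j = 0 := by
    intro j hj
    exact Pi.single_eq_of_ne (by simpa using hj) _
  simpa using norm_support {i} h

lemma norm_two_single_le {m : ℕ} (i j : Fin m) :
    hammingNorm ((Pi.single i 1 : Fm m) + Pi.single j 1) ≤ 2 := by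
  have h : ∀ k ∉ ({i, j} : Finset (Fin m)),
      ((Pi.single i 1 + Pi.single j 1 : Fm m)) k = 0 := by
    intro k hk
    simp only [Finset.mem_insert, Finset.mem_singleton, not_or] at hk
    show (Pi.single i 1 : Fm m) k + (Pi.single j 1 : Fm m) k = 0
    rw [Pi.single_eq_of_ne hk.1, Pi.single_eq_of_ne hk.2, add_zero]
  have := norm_support {i, j} h
  calc hammingNorm _ ≤ ({i,j} : Finset (Fin m)).card := this
    _ ≤ 2 := Finset.card_insert_le _ _ |>.trans (by simp)

lemma hd_eq_norm_add {m : ℕ} (a b : Fm m) : hammingDist a b = hammingNorm (a + b) := by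
  unfold hammingDist hammingNorm
  congr 1
  apply Finset.filter_congr
  intro i _
  have : ∀ x y : ZMod 2, (x ≠ y) ↔ (x + y ≠ 0) := by decide
  simp only [Pi.add_apply]
  exact this _ _

lemma ne3 {m : ℕ} {a s : Fm m} (h3 : 3 ≤ hammingNorm a) (hs : hammingNorm s ≤ 2) :
    a ≠ s := by
  intro h
  rw [h] at h3
  omega

lemma zhat_single' {m : ℕ} (α : Fm m) {γ : Fm m} (h0 : γ ≠ 0) (i : Fin m)
    (h : γ = Pi.single i 1) : zhat α ⟨γ, h0⟩ = α i := by
  subst h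
  unfold zhat
  rw [Finset.sum_eq_single i]
  · simp
  · intro j _ hj
    rw [if_neg]
    intro he
    have := congrFun he i
    simp [Pi.single_eq_of_ne (Ne.symm hj)] at this
  · simp

lemma zhat_nonsingle {m : ℕ} (α : Fm m) {γ : Fm m} (h0 : γ ≠ 0)
    (h : ∀ j, γ ≠ Pi.single j 1) : zhat α ⟨γ, h0⟩ = 0 := by
  unfold zhat
  apply Finset.sum_eq_zero
  intro j _
  rw [if_neg (h j)]

lemma eWord_val {m : ℕ} (ι : Idx m) {γ : Fm m} (h0 : γ ≠ 0) (h : γ ≠ (ι : Fm m)) :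
    eWord ι ⟨γ, h0⟩ = 0 := by
  rw [eWord, if_neg]
  intro h'
  exact h (congrArg Subtype.val h')

lemma coord_hx {m : ℕ} {c c' z z' : Fn m} (hx : c' + z' = c + z) {γ : Fm m} (hγ : γ ≠ 0) :
    coord c' γ + z' ⟨γ, hγ⟩ = coord c γ + z ⟨γ, hγ⟩ := by
  simp only [coord, dif_neg hγ]
  exact congrFun hx ⟨γ, hγ⟩

/-- If `ι, κ ∈ F^m` each have Hamming weight at least 3 and `d(ι, κ) ≥ 3`, then
the cosets `R_ι + ẑι + e^(ι)` and `R_κ + ẑκ + e^(κ)` are disjoint. -/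
theorem stmt4 (m : ℕ) (hm : 1 ≤ m) (ι κ : Idx m)
    (hι : 3 ≤ hammingDist (ι : Fm m) 0) (hκ : 3 ≤ hammingDist (κ : Fm m) 0)
    (hικ : 3 ≤ hammingDist (ι : Fm m) (κ : Fm m)) :
    Disjoint (coset (Rcomp ι) (zhat (ι : Fm m) + eWord ι))
      (coset (Rcomp κ) (zhat (κ : Fm m) + eWord κ)) := by
  rw [Set.disjoint_left]
  rintro x ⟨c, ⟨hcH, hcR⟩, rfl⟩ ⟨c', ⟨hc'H, hc'R⟩, hx⟩
  -- pick a coordinate where ι and κ differ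
  have hne : (ι : Fm m) ≠ (κ : Fm m) := by
    intro h
    rw [h, hammingDist_self] at hικ
    omega
  obtain ⟨i, hi⟩ := Function.ne_iff.mp hne
  set β : Fm m := Pi.single i 1 with hβdef
  -- norm facts
  have nι : 3 ≤ hammingNorm (ι : Fm m) := by rwa [hammingDist_zero_right] at hι
  have nκ : 3 ≤ hammingNorm (κ : Fm m) := by rwa [hammingDist_zero_right] at hκ
  have nικ : 3 ≤ hammingNorm ((ι : Fm m) + (κ : Fm m)) := by
    rwa [hd_eq_norm_add] at hικ
  have nβ2 : hammingNorm β ≤ 2 := (norm_single_le i).trans one_le_two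
  -- basic inequalities
  have hβ0 : β ≠ 0 := by
    intro h
    have := congrFun h i
    rw [hβdef] at this
    simp at this
  have hβι : β ≠ (ι : Fm m) := (ne3 nι nβ2).symm
  have hβκ : β ≠ (κ : Fm m) := (ne3 nκ nβ2).symm
  have hβικ : β ≠ (ι : Fm m) + (κ : Fm m) := (ne3 nικ nβ2).symm
  have hz2 : β + (ι : Fm m) ≠ 0 := add_ne_zero_of_ne' hβι
  have hz3 : β + (κ : Fm m) ≠ 0 := add_ne_zero_of_ne' hβκ
  have hβι_ne_κ : β + (ι : Fm m) ≠ (κ : Fm m) := by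
    intro h
    exact hβικ (by rw [myshift h, add_comm])
  have hβκ_ne_ι : β + (κ : Fm m) ≠ (ι : Fm m) := by
    intro h
    exact hβικ (myshift h)
  have hz4 : β + (ι : Fm m) + (κ : Fm m) ≠ 0 := add_ne_zero_of_ne' hβι_ne_κ
  have hβι_ne_ι : β + (ι : Fm m) ≠ (ι : Fm m) := by
    intro h
    exact hβ0 (by rw [myshift h, myadd_self])
  have hβκ_ne_κ : β + (κ : Fm m) ≠ (κ : Fm m) := by
    intro h
    exact hβ0 (by rw [myshift h, myadd_self])
  have key1 : ∀ x y z : ZMod 2, x + y + z = y → x = z := by decide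
  have key2 : ∀ x y z : ZMod 2, x + y + z = z → x = y := by decide
  have hγ4_ne_ι : β + (ι : Fm m) + (κ : Fm m) ≠ (ι : Fm m) := by
    intro h
    apply hβκ
    funext j
    have h' := congrFun h j
    simp only [Pi.add_apply] at h'
    exact key1 _ _ _ h'
  have hγ4_ne_κ : β + (ι : Fm m) + (κ : Fm m) ≠ (κ : Fm m) := by
    intro h
    apply hβι
    funext j
    have h' := congrFun h j
    simp only [Pi.add_apply] at h'
    exact key2 _ _ _ h'
  -- "not a standard basis vector" facts
  have nb2 : ∀ j, β + (ι : Fm m) ≠ Pi.single j 1 := by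
    intro j h
    refine ne3 nι (norm_two_single_le i j) ?_
    rw [← h, hβdef, ← add_assoc, myadd_self, zero_add]
  have nb3 : ∀ j, β + (κ : Fm m) ≠ Pi.single j 1 := by
    intro j h
    refine ne3 nκ (norm_two_single_le i j) ?_
    rw [← h, hβdef, ← add_assoc, myadd_self, zero_add]
  have nb4 : ∀ j, β + (ι : Fm m) + (κ : Fm m) ≠ Pi.single j 1 := by
    intro j h
    refine ne3 nικ (norm_two_single_le i j) ?_
    rw [← h, hβdef, add_assoc, ← add_assoc (Pi.single i 1), ← add_assoc,
      myadd_self, zero_add]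
  -- component relations
  have A1 : coord c β = coord c (β + (ι : Fm m)) := hcR β hβ0 hβι
  have A2 : coord c (β + (κ : Fm m)) = coord c (β + (κ : Fm m) + (ι : Fm m)) :=
    hcR _ hz3 hβκ_ne_ι
  have A2' : coord c (β + (κ : Fm m)) = coord c (β + (ι : Fm m) + (κ : Fm m)) := by
    rw [A2]
    congr 1
    ring
  have B1 : coord c' β = coord c' (β + (κ : Fm m)) := hc'R β hβ0 hβκ
  have B2 : coord c' (β + (ι : Fm m)) = coord c' (β + (ι : Fm m) + (κ : Fm m)) :=
    hc'R _ hz2 hβι_ne_κ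
  -- coordinate equations from hx
  have E1 : coord c' β + (κ : Fm m) i = coord c β + (ι : Fm m) i := by
    have h := coord_hx hx hβ0
    simp only [Pi.add_apply] at h
    rwa [zhat_single' _ hβ0 i hβdef, zhat_single' _ hβ0 i hβdef,
      eWord_val κ hβ0 hβκ, eWord_val ι hβ0 hβι, add_zero, add_zero] at h
  have E2 : coord c' (β + (ι : Fm m)) = coord c (β + (ι : Fm m)) := by
    have h := coord_hx hx hz2
    simp only [Pi.add_apply] at h
    rw [zhat_nonsingle _ hz2 nb2, zhat_nonsingle _ hz2 nb2,
      eWord_val κ hz2 hβι_ne_κ, eWord_val ι hz2 hβι_ne_ι] at h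
    simpa using h
  have E3 : coord c' (β + (κ : Fm m)) = coord c (β + (κ : Fm m)) := by
    have h := coord_hx hx hz3
    simp only [Pi.add_apply] at h
    rw [zhat_nonsingle _ hz3 nb3, zhat_nonsingle _ hz3 nb3,
      eWord_val κ hz3 hβκ_ne_κ, eWord_val ι hz3 hβκ_ne_ι] at h
    simpa using h
  have E4 : coord c' (β + (ι : Fm m) + (κ : Fm m)) = coord c (β + (ι : Fm m) + (κ : Fm m)) := by
    have h := coord_hx hx hz4
    simp only [Pi.add_apply] at h
    rw [zhat_nonsingle _ hz4 nb4, zhat_nonsingle _ hz4 nb4,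
      eWord_val κ hz4 hγ4_ne_κ, eWord_val ι hz4 hγ4_ne_ι] at h
    simpa using h
  -- chain
  have hcc' : coord c' β = coord c β := by
    rw [B1, E3, A2', ← E4, ← B2, E2, ← A1]
  rw [hcc'] at E1
  exact hi ((add_left_cancel E1).symm)
end

section
/- Let ι ∈ F^m have Hamming weight at least 3. Then the all-zero word 0^n does not belong to the coset R_ι + ẑι + e^(ι). -/
/-- If `ι ∈ F^m` has Hamming weight at least 3, then
`0^n ∉ R_ι + ẑι + e^(ι)`. -/
theorem stmt5 (m : ℕ) (hm : 1 ≤ m) (ι : Idx m) (hι : 3 ≤ hammingDist (ι : Fm m) 0) :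
    (0 : Fn m) ∉ coset (Rcomp ι) (zhat (ι : Fm m) + eWord ι) := by
  classical
  rintro ⟨c, ⟨hcH, hcR⟩, hc0⟩
  -- c = zhat + e
  have hc : c = zhat (ι : Fm m) + eWord ι := by
    funext κ
    have h1 := congrFun hc0 κ
    have key : ∀ a b : ZMod 2, a + b = 0 → a = b := by decide
    exact key _ _ h1
  -- weight bound tool
  have wbound : ∀ (x : Fm m) (s : Finset (Fin m)), (∀ i, x i ≠ 0 → i ∈ s) →
      hammingDist x 0 ≤ s.card := by
    intro x s hs
    have : hammingDist x 0 = (Finset.univ.filter fun i => x i ≠ 0).card := by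
      simp [hammingDist]
    rw [this]
    apply Finset.card_le_card
    intro i hi
    exact hs i (by simpa using hi)
  have hne1 : ∀ j, (ι : Fm m) ≠ Pi.single j 1 := by
    intro j hj
    have := wbound (ι : Fm m) {j} (by
      intro i hi
      rw [hj] at hi
      by_contra hij
      simp only [Finset.mem_singleton] at hij
      exact hi (Pi.single_eq_of_ne hij 1))
    rw [Finset.card_singleton] at this
    omega
  have hne2 : ∀ i j, (ι : Fm m) ≠ Pi.single i 1 + Pi.single j 1 := by
    intro i j hj
    have := wbound (ι : Fm m) {i, j} (by
      intro k hk
      rw [hj] at hk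
      by_contra hkij
      simp only [Finset.mem_insert, Finset.mem_singleton, not_or] at hkij
      apply hk
      simp [Pi.single_eq_of_ne hkij.1, Pi.single_eq_of_ne hkij.2])
    have h2 : ({i, j} : Finset (Fin m)).card ≤ 2 := Finset.card_insert_le _ _ |>.trans (by simp)
    omega
  -- pick i with ι i = 1
  obtain ⟨i, hi⟩ : ∃ i, (ι : Fm m) i = 1 := by
    by_contra h
    push_neg at h
    apply ι.2
    funext k
    have hk := h k
    simp only [Pi.zero_apply]
    have key2 : ∀ a : ZMod 2, a ≠ 1 → a = 0 := by decide
    exact key2 _ hk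
  set α : Fm m := Pi.single i 1 with hα
  have hα0 : α ≠ 0 := by
    intro h
    have := congrFun h i
    simp [hα] at this
  have hαι : α ≠ (ι : Fm m) := fun h => hne1 i h.symm
  have key := hcR α hα0 hαι
  -- compute coord c α = 1
  have hcα : coord c α = 1 := by
    rw [coord, dif_neg hα0, hc]
    show zhat (ι : Fm m) ⟨α, hα0⟩ + eWord ι ⟨α, hα0⟩ = 1
    have hz : zhat (ι : Fm m) ⟨α, hα0⟩ = (ι : Fm m) i := by
      rw [zhat]
      rw [Finset.sum_eq_single i]
      · simp [hα]
      · intro j _ hji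
        rw [if_neg]
        intro hsingle
        have := congrFun hsingle j
        simp [hα, Pi.single_eq_of_ne hji] at this
      · simp
    have he : eWord ι ⟨α, hα0⟩ = 0 := by
      rw [eWord, if_neg]
      intro h
      exact hαι (congrArg Subtype.val h)
    rw [hz, he, hi, add_zero]
  -- compute coord c (α + ι) = 0
  have hsum0 : α + (ι : Fm m) ≠ 0 := add_ne_zero_of_ne' hαι
  have hcαι : coord c (α + (ι : Fm m)) = 0 := by
    rw [coord, dif_neg hsum0, hc]
    show zhat (ι : Fm m) ⟨α + (ι : Fm m), hsum0⟩ + eWord ι ⟨_, hsum0⟩ = 0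
    have hz : zhat (ι : Fm m) ⟨α + (ι : Fm m), hsum0⟩ = 0 := by
      rw [zhat]
      apply Finset.sum_eq_zero
      intro j _
      rw [if_neg]
      intro h
      apply hne2 i j
      funext k
      have h1 := congrFun h k
      have key2 : ∀ a b c : ZMod 2, a + b = c → b = a + c := by decide
      have := key2 _ _ _ h1
      simpa [hα, add_comm] using this
    have he : eWord ι ⟨_, hsum0⟩ = 0 := by
      rw [eWord, if_neg]
      intro h
      have h1 : α + (ι : Fm m) = (ι : Fm m) := congrArg Subtype.val h
      apply hα0
      funext k
      have h2 := congrFun h1 k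
      have key2 : ∀ a b : ZMod 2, a + b = b → a = 0 := by decide
      exact key2 _ _ h2
    rw [hz, he, add_zero]
  rw [hcα, hcαι] at key
  exact one_ne_zero key
end

section
/- Let C ⊆ F^m be a 1-code with 0 ∈ C, and let Ċ := C \ {0}. Then the set P(C) := (H \ ⋃_{ι∈Ċ} (R_ι + ẑι + e^(ι))) ∪ ⋃_{ι∈Ċ} (R_ι + ẑι) is a 1-perfect code in F^n. -/
/-- The code `P(C) = (H \ ⋃_{ι∈Ċ}(R_ι + ẑι + e^(ι))) ∪ ⋃_{ι∈Ċ}(R_ι + ẑι)`,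
where `Ċ = C \ {0}` (the union is over the nonzero codewords of `C`). -/
def PofC {m : ℕ} (C : Set (Fm m)) : Set (Fn m) :=
  (hammingCode m \
      ⋃ (ι : Idx m) (_ : (ι : Fm m) ∈ C), coset (Rcomp ι) (zhat (ι : Fm m) + eWord ι))
    ∪ ⋃ (ι : Idx m) (_ : (ι : Fm m) ∈ C), coset (Rcomp ι) (zhat (ι : Fm m))

namespace S6
variable {m : ℕ}

lemma z2_add_self : ∀ a : ZMod 2, a + a = 0 := by decide
lemma z2_eq_of_add : ∀ a b : ZMod 2, a + b = 0 → a = b := by decide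
lemma z2_add_of_eq : ∀ a b : ZMod 2, a = b → a + b = 0 := by decide
lemma z2_one : ∀ a : ZMod 2, a ≠ 0 → a = 1 := by decide
lemma z2_rearr : ∀ a b c d : ZMod 2, a + b = c + d ↔ a + c = b + d := by decide
lemma z2_ne_iff : ∀ a b : ZMod 2, a ≠ b ↔ a + b ≠ 0 := by decide

lemma fm_add_self (a : Fm m) : a + a = 0 := by
  funext i; exact z2_add_self (a i)
lemma fm_cancel {a b : Fm m} (h : a + b = 0) : a = b := by
  funext i; exact z2_eq_of_add _ _ (congrFun h i)
lemma fm_add_add (a b : Fm m) : a + b + b = a := by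
  rw [add_assoc, fm_add_self, add_zero]
lemma fn_add_self (x : Fn m) : x + x = 0 := by
  funext κ; exact z2_add_self (x κ)
lemma fn_add_add (x u : Fn m) : x + u + u = x := by
  rw [add_assoc, fn_add_self, add_zero]
lemma fn_cancel {x y : Fn m} (h : x + y = 0) : x = y := by
  funext κ; exact z2_eq_of_add _ _ (congrFun h κ)

lemma coord_eq (x : Fn m) {α : Fm m} (h : α ≠ 0) : coord x α = x ⟨α, h⟩ := dif_neg h
lemma coord_zero_arg (x : Fn m) : coord x 0 = 0 := dif_pos rfl
lemma coord_add (x y : Fn m) (α : Fm m) : coord (x + y) α = coord x α + coord y α := by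
  by_cases h : α = 0 <;> simp [coord, h]

def syndrome (c : Fn m) : Fm m := ∑ ι : Idx m, c ι • (ι : Fm m)

lemma mem_hammingCode_iff {c : Fn m} : c ∈ hammingCode m ↔ syndrome c = 0 := Iff.rfl

lemma syndrome_add (x y : Fn m) : syndrome (x + y) = syndrome x + syndrome y := by
  unfold syndrome
  rw [← Finset.sum_add_distrib]
  exact Finset.sum_congr rfl fun κ _ => by rw [Pi.add_apply, add_smul]

lemma syndrome_eWord (ι : Idx m) : syndrome (eWord ι) = ι.val := by
  unfold syndrome eWord
  rw [Finset.sum_eq_single ι]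
  · simp
  · intro κ _ hκ; simp [hκ]
  · intro h; exact absurd (Finset.mem_univ ι) h

lemma single_ne_zero' (i : Fin m) : (Pi.single i 1 : Fm m) ≠ 0 := by
  intro h
  have := congrFun h i
  simp [Pi.single_eq_same] at this

lemma single_inj {i j : Fin m} (h : (Pi.single i 1 : Fm m) = Pi.single j 1) : i = j := by
  by_contra hne
  have := congrFun h i
  rw [Pi.single_eq_same, Pi.single_eq_of_ne hne] at this
  exact one_ne_zero this

lemma syndrome_zhat (α : Fm m) : syndrome (zhat α) = α := by
  unfold syndrome zhat
  have : ∀ κ : Idx m, (∑ i : Fin m, if (κ : Fm m) = Pi.single i 1 then α i else 0) • (κ : Fm m)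
      = ∑ i : Fin m, (if (κ : Fm m) = Pi.single i 1 then α i else 0) • (κ : Fm m) := by
    intro κ; rw [Finset.sum_smul]
  rw [Finset.sum_congr rfl fun κ _ => this κ, Finset.sum_comm]
  have step : ∀ i : Fin m,
      (∑ κ : Idx m, (if (κ : Fm m) = Pi.single i 1 then α i else 0) • (κ : Fm m))
        = Pi.single i (α i) := by
    intro i
    rw [Finset.sum_eq_single (⟨Pi.single i 1, single_ne_zero' i⟩ : Idx m)]
    · simp [← Pi.single_smul]
    · intro κ _ hκ
      have : (κ : Fm m) ≠ Pi.single i 1 := fun h => hκ (Subtype.ext h)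
      simp [this]
    · intro h; exact absurd (Finset.mem_univ _) h
  rw [Finset.sum_congr rfl fun i _ => step i, Finset.univ_sum_single]

lemma add_ne_zero_of_ne' {m : ℕ} {ι κ : Fm m} (h : ι ≠ κ) : ι + κ ≠ 0 :=
  fun h0 => h (fm_cancel h0)

def supp (x : Fn m) : Finset (Idx m) := Finset.univ.filter (fun κ => x κ ≠ 0)

lemma mem_supp {x : Fn m} {κ : Idx m} : κ ∈ supp x ↔ x κ ≠ 0 := by simp [supp]

lemma hammingDist_eq (x y : Fn m) : hammingDist x y = (supp (x + y)).card := by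
  show (Finset.univ.filter fun κ => x κ ≠ y κ).card = _
  congr 1
  apply Finset.filter_congr
  intro κ _
  simpa using z2_ne_iff (x κ) (y κ)

lemma syndrome_eq_sum_supp (x : Fn m) : syndrome x = ∑ κ ∈ supp x, (κ : Fm m) := by
  unfold syndrome
  rw [← Finset.sum_filter_of_ne (p := fun κ => x κ ≠ 0)
    (by intro κ _ h h0; exact h (by rw [h0, zero_smul]))]
  apply Finset.sum_congr rfl
  intro κ hκ
  have h1 : x κ ≠ 0 := by simpa [supp] using hκ
  rw [z2_one _ h1, one_smul]

lemma supp_nonempty {x : Fn m} (h : x ≠ 0) : (supp x).Nonempty := by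
  by_contra hne
  apply h
  funext κ
  have he := Finset.not_nonempty_iff_eq_empty.mp hne
  by_contra hκ
  have : κ ∈ supp x := mem_supp.mpr hκ
  simp_all

lemma syndrome_ne_zero_of_small {x : Fn m} (hx : x ≠ 0) (hc : (supp x).card ≤ 2) :
    syndrome x ≠ 0 := by
  have h1 : 1 ≤ (supp x).card := Finset.card_pos.mpr (supp_nonempty hx)
  have : (supp x).card = 1 ∨ (supp x).card = 2 := by omega
  rcases this with h | h
  · obtain ⟨β, hβ⟩ := Finset.card_eq_one.mp h
    rw [syndrome_eq_sum_supp, hβ, Finset.sum_singleton]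
    exact β.2
  · obtain ⟨β₁, β₂, hne, hβ⟩ := Finset.card_eq_two.mp h
    rw [syndrome_eq_sum_supp, hβ, Finset.sum_insert (by simp [hne]), Finset.sum_singleton]
    exact add_ne_zero_of_ne' (fun h => hne (Subtype.ext h))

lemma pair_small {w : Fn m} {ι : Idx m} (hs : syndrome w = ι.val) (hc : (supp w).card ≤ 2)
    {δ : Fm m} (hδ0 : δ ≠ 0) (hδι : δ ≠ ι.val) :
    coord w δ + coord w (δ + ι.val) = 0 := by
  have hδι0 : δ + ι.val ≠ 0 := fun h => hδι (fm_cancel h)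
  rw [coord_eq w hδ0, coord_eq w hδι0]
  have hw0 : w ≠ 0 := by
    intro h; apply ι.2; rw [← hs, h]; simp [syndrome]
  have h1 : 1 ≤ (supp w).card := Finset.card_pos.mpr (supp_nonempty hw0)
  have hcases : (supp w).card = 1 ∨ (supp w).card = 2 := by omega
  have notmem : ∀ (κ : Idx m), κ ∉ supp w → w κ = 0 := by
    intro κ hκ; by_contra h; exact hκ (mem_supp.mpr h)
  rcases hcases with h | h
  · obtain ⟨β, hβ⟩ := Finset.card_eq_one.mp h
    have hβval : (β : Fm m) = ι.val := by
      have := syndrome_eq_sum_supp w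
      rw [hβ, Finset.sum_singleton] at this
      rw [← hs, this]
    have z1 : w ⟨δ, hδ0⟩ = 0 := by
      apply notmem; rw [hβ, Finset.mem_singleton]
      intro h
      exact hδι (by rw [← hβval]; exact congrArg Subtype.val h)
    have z2 : w ⟨δ + ι.val, hδι0⟩ = 0 := by
      apply notmem; rw [hβ, Finset.mem_singleton]
      intro h
      apply hδ0
      have hv0 : δ + ι.val = (β : Fm m) := congrArg Subtype.val h
      have hv : δ + ι.val = ι.val := by rw [hv0, hβval]
      have := congrArg (fun v => v + ι.val) hv
      simpa [fm_add_add, fm_add_self] using this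
    rw [z1, z2, add_zero]
  · obtain ⟨β₁, β₂, hne, hβ⟩ := Finset.card_eq_two.mp h
    have hsum : (β₁ : Fm m) + β₂ = ι.val := by
      have := syndrome_eq_sum_supp w
      rw [hβ, Finset.sum_insert (by simp [hne]), Finset.sum_singleton] at this
      rw [← hs, this]
    have wval : ∀ κ : Idx m, w κ = if κ = β₁ ∨ κ = β₂ then 1 else 0 := by
      intro κ
      by_cases hk : κ = β₁ ∨ κ = β₂
      · rw [if_pos hk]
        apply z2_one
        apply mem_supp.mp
        rw [hβ]; simpa using hk
      · rw [if_neg hk]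
        apply notmem
        rw [hβ]; simpa using hk
    have e1 : δ = (β₁ : Fm m) ↔ δ + ι.val = (β₂ : Fm m) := by
      constructor
      · intro h; rw [h, ← hsum, ← add_assoc, fm_add_self, zero_add]
      · intro h
        have h2 := congrArg (fun v => v + ι.val) h
        simp only [fm_add_add] at h2
        rw [h2, ← hsum, add_comm (β₁ : Fm m) β₂, ← add_assoc, fm_add_self, zero_add]
    have e2 : δ = (β₂ : Fm m) ↔ δ + ι.val = (β₁ : Fm m) := by
      constructor
      · intro h
        rw [h, ← hsum, add_comm (β₁ : Fm m) β₂, ← add_assoc, fm_add_self, zero_add]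
      · intro h
        have h2 := congrArg (fun v => v + ι.val) h
        simp only [fm_add_add] at h2
        rw [h2, ← hsum, ← add_assoc, fm_add_self, zero_add]
    rw [wval, wval]
    simp only [Subtype.ext_iff]
    by_cases hA : δ = (β₁ : Fm m)
    · rw [if_pos (Or.inl hA), if_pos (Or.inr (e1.mp hA))]; decide
    · by_cases hA2 : δ = (β₂ : Fm m)
      · rw [if_pos (Or.inr hA2), if_pos (Or.inl (e2.mp hA2))]; decide
      · rw [if_neg (by tauto), if_neg (by
          rintro (h | h)
          · exact hA2 (e2.mpr h)
          · exact hA (e1.mpr h)), add_zero]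


lemma coord_eWord (κ : Idx m) (α : Fm m) :
    coord (eWord κ) α = if α = κ.val then 1 else 0 := by
  by_cases h : α = 0
  · rw [h, coord_zero_arg, if_neg (fun hh => κ.2 hh.symm)]
  · rw [coord_eq _ h]
    unfold eWord
    by_cases h2 : α = κ.val
    · rw [if_pos (Subtype.ext h2), if_pos h2]
    · rw [if_neg (fun hh => h2 (congrArg Subtype.val hh)), if_neg h2]

lemma coord_zhat_single (γ : Fm m) (i : Fin m) :
    coord (zhat γ) (Pi.single i 1) = γ i := by
  rw [coord_eq _ (single_ne_zero' i)]
  unfold zhat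
  rw [Finset.sum_eq_single i]
  · simp
  · intro j _ hj
    rw [if_neg (fun h => hj ((single_inj (h : (Pi.single i 1 : Fm m) = Pi.single j 1)).symm))]
  · intro h; exact absurd (Finset.mem_univ _) h

lemma coord_zhat_zero (γ : Fm m) {α : Fm m} (h : ∀ i, α ≠ Pi.single i 1) :
    coord (zhat γ) α = 0 := by
  by_cases h0 : α = 0
  · rw [h0, coord_zero_arg]
  · rw [coord_eq _ h0]
    unfold zhat
    apply Finset.sum_eq_zero
    intro i _
    rw [if_neg (h i)]

lemma zhat_add (a b : Fm m) : zhat (a + b) = zhat a + zhat b := by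
  funext κ
  show _ = zhat a κ + zhat b κ
  unfold zhat
  rw [← Finset.sum_add_distrib]
  apply Finset.sum_congr rfl
  intro i _
  by_cases h : (κ : Fm m) = Pi.single i 1 <;> simp [h]

def pcond (ι : Idx m) (x : Fn m) : Prop :=
  ∀ δ : Fm m, δ ≠ 0 → δ ≠ ι.val →
    coord x δ + coord x (δ + ι.val) = coord (zhat ι.val) δ + coord (zhat ι.val) (δ + ι.val)

lemma mem_coset_iff {M : Set (Fn m)} {z x : Fn m} : x ∈ coset M z ↔ x + z ∈ M := by
  constructor
  · rintro ⟨c, hc, rfl⟩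
    rwa [fn_add_add]
  · intro h
    exact ⟨x + z, h, fn_add_add x z⟩

lemma mem_Rcomp_iff {ι : Idx m} {r : Fn m} :
    r ∈ Rcomp ι ↔ syndrome r = 0 ∧ ∀ δ : Fm m, δ ≠ 0 → δ ≠ ι.val →
      coord r δ + coord r (δ + ι.val) = 0 := by
  unfold Rcomp
  rw [Set.mem_setOf_eq, mem_hammingCode_iff]
  constructor
  · rintro ⟨h1, h2⟩
    exact ⟨h1, fun δ hδ0 hδι => z2_add_of_eq _ _ (h2 δ hδ0 hδι)⟩
  · rintro ⟨h1, h2⟩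
    exact ⟨h1, fun δ hδ0 hδι => z2_eq_of_add _ _ (h2 δ hδ0 hδι)⟩

lemma coord_eWord_vanish {ι : Idx m} {δ : Fm m} (hδ0 : δ ≠ 0) (hδι : δ ≠ ι.val) :
    coord (eWord ι) δ + coord (eWord ι) (δ + ι.val) = 0 := by
  rw [coord_eWord, coord_eWord, if_neg hδι, if_neg, add_zero]
  intro h
  apply hδ0
  have := congrArg (fun v => v + ι.val) h
  simpa [fm_add_add, fm_add_self] using this

lemma z2_six : ∀ a b za zb ea eb : ZMod 2, ea + eb = 0 →
    ((a + (za + ea)) + (b + (zb + eb)) = 0 ↔ a + b = za + zb) := by decide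

lemma z2_four : ∀ a b za zb : ZMod 2,
    ((a + za) + (b + zb) = 0 ↔ a + b = za + zb) := by decide

lemma fm_eq_iff_add_eq_zero {a b : Fm m} : a + b = 0 ↔ a = b :=
  ⟨fm_cancel, fun h => by rw [h, fm_add_self]⟩

lemma mem_D_iff {ι : Idx m} {x : Fn m} :
    x ∈ coset (Rcomp ι) (zhat ι.val + eWord ι) ↔ syndrome x = 0 ∧ pcond ι x := by
  rw [mem_coset_iff, mem_Rcomp_iff]
  have hz : syndrome (x + (zhat ι.val + eWord ι)) = syndrome x := by
    rw [syndrome_add, syndrome_add, syndrome_zhat, syndrome_eWord, fm_add_self, add_zero]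
  rw [hz]
  apply and_congr_right
  intro _
  unfold pcond
  apply forall_congr'
  intro δ
  apply imp_congr_right; intro h0
  apply imp_congr_right; intro hι
  rw [coord_add, coord_add, coord_add, coord_add]
  exact z2_six _ _ _ _ _ _ (coord_eWord_vanish h0 hι)

lemma mem_D'_iff {ι : Idx m} {x : Fn m} :
    x ∈ coset (Rcomp ι) (zhat ι.val) ↔ syndrome x = ι.val ∧ pcond ι x := by
  rw [mem_coset_iff, mem_Rcomp_iff]
  have hz : syndrome (x + zhat ι.val) = syndrome x + ι.val := by
    rw [syndrome_add, syndrome_zhat]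
  rw [hz, fm_eq_iff_add_eq_zero]
  apply and_congr_right
  intro _
  unfold pcond
  apply forall_congr'
  intro δ
  apply imp_congr_right; intro h0
  apply imp_congr_right; intro hι
  rw [coord_add, coord_add]
  exact z2_four _ _ _ _

variable {m : ℕ}

lemma z2_swap : ∀ a b u u' : ZMod 2, a + u = b + u' → u + u' = a + b := by decide

lemma fm_rearr {a b u u' : Fm m} (h : a + u = b + u') : u + u' = a + b := by
  funext i
  exact z2_swap _ _ _ _ (congrFun h i)

lemma fm_dist_zero (v : Fm m) :
    hammingDist v (0 : Fm m) = (Finset.univ.filter fun t => v t ≠ 0).card := by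
  show (Finset.univ.filter fun t => v t ≠ (0:Fm m) t).card = _
  rfl

lemma wt3_ne_single {v : Fm m} (h3 : 3 ≤ hammingDist v (0 : Fm m)) (i : Fin m) :
    v ≠ Pi.single i 1 := by
  rintro rfl
  rw [fm_dist_zero] at h3
  have hsub : (Finset.univ.filter fun t => (Pi.single i 1 : Fm m) t ≠ 0) ⊆ {i} := by
    intro t ht
    simp only [Finset.mem_filter] at ht
    simp only [Finset.mem_singleton]
    by_contra hne
    exact ht.2 (Pi.single_eq_of_ne hne 1)
  have := Finset.card_le_card hsub
  simp only [Finset.card_singleton] at this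
  omega

lemma wt3_ne_double {v : Fm m} (h3 : 3 ≤ hammingDist v (0 : Fm m)) (i j : Fin m) :
    v ≠ Pi.single i 1 + Pi.single j 1 := by
  rintro rfl
  rw [fm_dist_zero] at h3
  have hsub : (Finset.univ.filter fun t => (Pi.single i 1 + Pi.single j 1 : Fm m) t ≠ 0)
      ⊆ {i, j} := by
    intro t ht
    simp only [Finset.mem_filter] at ht
    simp only [Finset.mem_insert, Finset.mem_singleton]
    by_contra hne
    push_neg at hne
    apply ht.2
    rw [Pi.add_apply, Pi.single_eq_of_ne hne.1 1, Pi.single_eq_of_ne hne.2 1, add_zero]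
  have h1 := Finset.card_le_card hsub
  have h2 : ({i, j} : Finset (Fin m)).card ≤ 2 :=
    le_trans (Finset.card_insert_le _ _) (by simp)
  omega

lemma wt3_ne_zero {v : Fm m} (h3 : 3 ≤ hammingDist v (0 : Fm m)) : v ≠ 0 := by
  rintro rfl
  simp at h3

lemma not_single_add {v : Fm m} (h3 : 3 ≤ hammingDist v (0 : Fm m)) (t j : Fin m) :
    Pi.single t 1 + v ≠ Pi.single j 1 := by
  intro h
  have h2 := congrArg (fun x => Pi.single t (1 : ZMod 2) + x) h
  simp only at h2
  rw [← add_assoc, fm_add_self, zero_add] at h2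
  exact wt3_ne_double h3 t j h2

section Clash
variable {ι κ : Idx m}

/-- membership in the coset `π^t + {0, ι, κ, ι+κ}`, in disjunction form -/
def inCos (ι κ : Idx m) (t : Fin m) (v : Fm m) : Prop :=
  v = Pi.single t 1 ∨ v = Pi.single t 1 + ι.val ∨ v = Pi.single t 1 + κ.val ∨
    v = Pi.single t 1 + ι.val + κ.val

lemma inCos_decomp {t : Fin m} {v : Fm m} (h : inCos ι κ t v) :
    ∃ u : Fm m, (u = 0 ∨ u = ι.val ∨ u = κ.val ∨ u = ι.val + κ.val) ∧
      v = Pi.single t 1 + u := by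
  rcases h with h | h | h | h
  · exact ⟨0, Or.inl rfl, by rw [h, add_zero]⟩
  · exact ⟨ι.val, Or.inr (Or.inl rfl), h⟩
  · exact ⟨κ.val, Or.inr (Or.inr (Or.inl rfl)), h⟩
  · exact ⟨ι.val + κ.val, Or.inr (Or.inr (Or.inr rfl)), by rw [h, add_assoc]⟩

lemma clash (h3ι : 3 ≤ hammingDist ι.val (0 : Fm m)) (h3κ : 3 ≤ hammingDist κ.val (0 : Fm m))
    (h3γ : 3 ≤ hammingDist (ι.val + κ.val) (0 : Fm m)) {t t' : Fin m} (htt' : t ≠ t')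
    {v : Fm m} (hv : inCos ι κ t v) (hv' : inCos ι κ t' v) : False := by
  obtain ⟨u, hu, rfl⟩ := inCos_decomp hv
  obtain ⟨u', hu', heq⟩ := inCos_decomp hv'
  have key : u + u' = Pi.single t 1 + Pi.single t' 1 := fm_rearr heq
  have hzero : ¬ ((0 : Fm m) = Pi.single t 1 + Pi.single t' 1) := by
    intro h
    exact htt' (single_inj (fm_cancel h.symm))
  have hι : ¬ (ι.val = Pi.single t 1 + Pi.single t' 1) := wt3_ne_double h3ι t t'
  have hκ : ¬ (κ.val = Pi.single t 1 + Pi.single t' 1) := wt3_ne_double h3κ t t'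
  have hγ : ¬ (ι.val + κ.val = Pi.single t 1 + Pi.single t' 1) := wt3_ne_double h3γ t t'
  rcases hu with rfl | rfl | rfl | rfl <;> rcases hu' with rfl | rfl | rfl | rfl
  · rw [add_zero] at key; exact hzero key
  · rw [zero_add] at key; exact hι key
  · rw [zero_add] at key; exact hκ key
  · rw [zero_add] at key; exact hγ key
  · rw [add_zero] at key; exact hι key
  · rw [fm_add_self] at key; exact hzero key
  · exact hγ key
  · rw [← add_assoc, fm_add_self, zero_add] at key; exact hκ key
  · rw [add_zero] at key; exact hκ key
  · rw [add_comm] at key; exact hγ key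
  · rw [fm_add_self] at key; exact hzero key
  · rw [add_comm (ι.val) (κ.val), ← add_assoc, fm_add_self, zero_add] at key
    exact hι key
  · rw [add_zero] at key; exact hγ key
  · rw [add_comm ι.val κ.val, add_assoc, fm_add_self, add_zero] at key
    exact hκ key
  · rw [add_assoc, fm_add_self, add_zero] at key; exact hι key
  · rw [fm_add_self] at key; exact hzero key

end Clash

lemma z2_code1 : ∀ a b a' b' zz : ZMod 2, (a + a') + (b + b') = 0 → a' + b' = zz →
    a + b = zz := by decide

lemma codeBBne {ι κ : Idx m} {c c' : Fn m} (hne : ι ≠ κ)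
    (h3ι : 3 ≤ hammingDist ι.val (0 : Fm m)) (h3κ : 3 ≤ hammingDist κ.val (0 : Fm m))
    (h3γ : 3 ≤ hammingDist (ι.val + κ.val) (0 : Fm m))
    (hc : syndrome c = ι.val ∧ pcond ι c) (hc' : syndrome c' = κ.val ∧ pcond κ c')
    (hd : hammingDist c c' ≤ 2) : False := by
  set w := c + c' with hw
  have hwcard : (supp w).card ≤ 2 := by rw [← hammingDist_eq]; exact hd
  -- three distinct indices in the support of γ = ι + κ
  have hγcard : 3 ≤ (Finset.univ.filter fun t => (ι.val + κ.val) t ≠ 0).card := by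
    rw [← fm_dist_zero]; exact h3γ
  obtain ⟨T, hTsub, hT3⟩ := Finset.exists_subset_card_eq hγcard
  obtain ⟨i, j, k, hij, hik, hjk, rfl⟩ := Finset.card_eq_three.mp hT3
  -- find t ∈ {i,j,k} whose coset avoids supp w
  have key : ∃ t ∈ ({i, j, k} : Finset (Fin m)),
      ∀ v : Idx m, v ∈ supp w → ¬ inCos ι κ t (v : Fm m) := by
    by_contra hcon
    push_neg at hcon
    obtain ⟨vi, hvi, hbi⟩ := hcon i (by simp)
    obtain ⟨vj, hvj, hbj⟩ := hcon j (by simp)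
    obtain ⟨vk, hvk, hbk⟩ := hcon k (by simp)
    have hpig : vi = vj ∨ vi = vk ∨ vj = vk := by
      by_contra hno
      push_neg at hno
      have hsub : ({vi, vj, vk} : Finset (Idx m)) ⊆ supp w := by
        intro v hv
        simp only [Finset.mem_insert, Finset.mem_singleton] at hv
        rcases hv with rfl | rfl | rfl <;> assumption
      have hcard : ({vi, vj, vk} : Finset (Idx m)).card = 3 :=
        Finset.card_eq_three.mpr ⟨vi, vj, vk, hno.1, hno.2.1, hno.2.2, rfl⟩
      have := Finset.card_le_card hsub
      omega
    rcases hpig with h | h | h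
    · exact clash h3ι h3κ h3γ hij hbi (h ▸ hbj)
    · exact clash h3ι h3κ h3γ hik hbi (h ▸ hbk)
    · exact clash h3ι h3κ h3γ hjk hbj (h ▸ hbk)
  obtain ⟨t, htmem, havoid⟩ := key
  have hγt : (ι.val + κ.val) t ≠ 0 := by
    have := hTsub htmem
    simpa using this
  -- the four points
  set α : Fm m := Pi.single t 1 with hα
  -- basic non-degeneracies
  have hα0 : α ≠ 0 := single_ne_zero' t
  have hαι : α ≠ ι.val := fun h => wt3_ne_single h3ι t h.symm
  have hακ : α ≠ κ.val := fun h => wt3_ne_single h3κ t h.symm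
  have hαγ : α ≠ ι.val + κ.val := fun h => wt3_ne_single h3γ t h.symm
  have hp2ne0 : α + ι.val ≠ 0 := fun h => hαι (fm_cancel h)
  have hp3ne0 : α + κ.val ≠ 0 := fun h => hακ (fm_cancel h)
  have hp3neι : α + κ.val ≠ ι.val := by
    intro h
    apply hαγ
    have h2 : α + κ.val + κ.val = ι.val + κ.val := by rw [h]
    rwa [fm_add_add] at h2
  have hp2neκ : α + ι.val ≠ κ.val := by
    intro h
    apply hαγ
    have h2 : α + ι.val + ι.val = κ.val + ι.val := by rw [h]
    rw [fm_add_add] at h2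
    rw [h2, add_comm]
  -- vanishing of w on the coset of α
  have hwv : ∀ p : Fm m, inCos ι κ t p → coord w p = 0 := by
    intro p hp
    by_cases h0 : p = 0
    · rw [h0, coord_zero_arg]
    · rw [coord_eq _ h0]
      by_contra hne0
      exact havoid ⟨p, h0⟩ (mem_supp.mpr hne0) hp
  have cw1 : coord c' α = coord c α := by
    have := hwv α (Or.inl rfl)
    rw [hw, coord_add] at this
    exact (z2_eq_of_add _ _ this).symm
  have cw2 : coord c' (α + ι.val) = coord c (α + ι.val) := by
    have := hwv _ (Or.inr (Or.inl rfl))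
    rw [hw, coord_add] at this
    exact (z2_eq_of_add _ _ this).symm
  have cw3 : coord c' (α + κ.val) = coord c (α + κ.val) := by
    have := hwv _ (Or.inr (Or.inr (Or.inl rfl)))
    rw [hw, coord_add] at this
    exact (z2_eq_of_add _ _ this).symm
  have cw4 : coord c' (α + ι.val + κ.val) = coord c (α + ι.val + κ.val) := by
    have := hwv _ (Or.inr (Or.inr (Or.inr rfl)))
    rw [hw, coord_add] at this
    exact (z2_eq_of_add _ _ this).symm
  -- zhat values
  have hZι1 : coord (zhat ι.val) α = ι.val t := coord_zhat_single _ t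
  have hZκ1 : coord (zhat κ.val) α = κ.val t := coord_zhat_single _ t
  have hZι2 : coord (zhat ι.val) (α + ι.val) = 0 :=
    coord_zhat_zero _ (fun j => not_single_add h3ι t j)
  have hZκ2 : coord (zhat κ.val) (α + ι.val) = 0 :=
    coord_zhat_zero _ (fun j => not_single_add h3ι t j)
  have hZι3 : coord (zhat ι.val) (α + κ.val) = 0 :=
    coord_zhat_zero _ (fun j => not_single_add h3κ t j)
  have hZκ3 : coord (zhat κ.val) (α + κ.val) = 0 :=
    coord_zhat_zero _ (fun j => not_single_add h3κ t j)
  have hZι4 : coord (zhat ι.val) (α + ι.val + κ.val) = 0 := by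
    apply coord_zhat_zero
    intro j
    rw [add_assoc]
    exact not_single_add h3γ t j
  have hZκ4 : coord (zhat κ.val) (α + ι.val + κ.val) = 0 := by
    apply coord_zhat_zero
    intro j
    rw [add_assoc]
    exact not_single_add h3γ t j
  -- the four pair equations
  have E1 := hc.2 α hα0 hαι
  have E2 := hc.2 (α + κ.val) hp3ne0 hp3neι
  have E3 := hc'.2 α hα0 hακ
  have E4 := hc'.2 (α + ι.val) hp2ne0 hp2neκ
  rw [hZι1, hZι2] at E1
  have hre : α + κ.val + ι.val = α + ι.val + κ.val := add_right_comm _ _ _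
  rw [hre, hZι3, hZι4] at E2
  rw [hZκ1, hZκ3] at E3
  rw [hZκ2, hZκ4] at E4
  rw [cw1, cw3] at E3
  rw [cw2, cw4] at E4
  -- now pure ZMod 2 arithmetic
  have hγt1 : ι.val t + κ.val t = 1 := by
    have : (ι.val + κ.val) t = ι.val t + κ.val t := rfl
    rw [this] at hγt
    exact z2_one _ hγt
  have s1 := z2_add_self (coord c α)
  have s2 := z2_add_self (coord c (α + ι.val))
  have s3 := z2_add_self (coord c (α + κ.val))
  have s4 := z2_add_self (coord c (α + ι.val + κ.val))
  have final : ι.val t + κ.val t = 0 := by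
    linear_combination s1 + s2 + s3 + s4 - E1 - E2 - E3 - E4
  rw [hγt1] at final
  exact one_ne_zero final

variable {m : ℕ}

lemma codeAA {c c' : Fn m} (h : syndrome c = 0) (h' : syndrome c' = 0) (hne : c ≠ c')
    (hd : hammingDist c c' ≤ 2) : False := by
  apply syndrome_ne_zero_of_small (x := c + c')
    (fun h0 => hne (fn_cancel h0))
    (by rw [← hammingDist_eq]; exact hd)
  rw [syndrome_add, h, h', add_zero]

lemma codeAB {ι : Idx m} {c c' : Fn m} (hcH : syndrome c = 0)
    (hcD : ¬(syndrome c = 0 ∧ pcond ι c)) (hc' : syndrome c' = ι.val ∧ pcond ι c')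
    (hd : hammingDist c c' ≤ 2) : False := by
  apply hcD
  refine ⟨hcH, ?_⟩
  intro δ h0 hι
  have hw := pair_small (w := c + c') (ι := ι)
    (by rw [syndrome_add, hcH, zero_add, hc'.1])
    (by rw [← hammingDist_eq]; exact hd) h0 hι
  have h3 := hc'.2 δ h0 hι
  rw [coord_add, coord_add] at hw
  exact z2_code1 _ _ _ _ _ hw h3

lemma codeBBeq {ι : Idx m} {c c' : Fn m} (hc : syndrome c = ι.val) (hc' : syndrome c' = ι.val)
    (hne : c ≠ c') (hd : hammingDist c c' ≤ 2) : False := by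
  apply syndrome_ne_zero_of_small (x := c + c')
    (fun h0 => hne (fn_cancel h0))
    (by rw [← hammingDist_eq]; exact hd)
  rw [syndrome_add, hc, hc', fm_add_self]

-- covering helpers

lemma z2_five : ∀ a b ua ub zz : ZMod 2, a + b = zz → ua + ub = 0 →
    (a + ua) + (b + ub) = zz := by decide

lemma pcond_add {ι : Idx m} {x u : Fn m} (hx : pcond ι x)
    (hu : ∀ δ : Fm m, δ ≠ 0 → δ ≠ ι.val → coord u δ + coord u (δ + ι.val) = 0) :
    pcond ι (x + u) := by
  intro δ h0 hι
  rw [coord_add, coord_add]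
  exact z2_five _ _ _ _ _ (hx δ h0 hι) (hu δ h0 hι)

lemma supp_eWord (κ : Idx m) : supp (eWord κ) = {κ} := by
  ext v
  rw [mem_supp, Finset.mem_singleton]
  unfold eWord
  by_cases h : v = κ <;> simp [h]

lemma dist_add_eWord (x : Fn m) (κ : Idx m) : hammingDist x (x + eWord κ) = 1 := by
  rw [hammingDist_eq]
  have : x + (x + eWord κ) = eWord κ := by
    rw [← add_assoc, fn_add_self, zero_add]
  rw [this, supp_eWord, Finset.card_singleton]

lemma supp_pair_card (a b : Idx m) : (supp (eWord a + eWord b)).card ≤ 2 := by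
  have hsub : supp (eWord a + eWord b) ⊆ {a, b} := by
    intro v hv
    rw [mem_supp] at hv
    simp only [Finset.mem_insert, Finset.mem_singleton]
    by_contra hno
    push_neg at hno
    apply hv
    show eWord a v + eWord b v = 0
    unfold eWord
    rw [if_neg hno.1, if_neg hno.2, add_zero]
  exact le_trans (Finset.card_le_card hsub)
    (le_trans (Finset.card_insert_le _ _) (by simp))

lemma cover (C : Set (Fm m)) (x : Fn m) : ∃ c ∈ PofC C, hammingDist x c ≤ 1 := by
  by_cases hs : syndrome x = 0
  · by_cases hx : ∃ ι : Idx m, ι.val ∈ C ∧ (syndrome x = 0 ∧ pcond ι x)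
    · obtain ⟨ι, hιC, hD⟩ := hx
      refine ⟨x + eWord ι, ?_, le_of_eq (dist_add_eWord x ι)⟩
      apply Set.mem_union_right
      simp only [Set.mem_iUnion]
      refine ⟨ι, hιC, mem_D'_iff.mpr ⟨?_, ?_⟩⟩
      · rw [syndrome_add, hs, zero_add, syndrome_eWord]
      · exact pcond_add hD.2 (fun δ h0 hι => coord_eWord_vanish h0 hι)
    · refine ⟨x, ?_, by rw [hammingDist_self]; omega⟩
      apply Set.mem_union_left
      refine ⟨mem_hammingCode_iff.mpr hs, ?_⟩
      simp only [Set.mem_iUnion, not_exists]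
      intro ι hιC hmem
      exact hx ⟨ι, hιC, mem_D_iff.mp hmem⟩
  · set sι : Idx m := ⟨syndrome x, hs⟩ with hsι
    set y := x + eWord sι with hy
    have hys : syndrome y = 0 := by
      rw [hy, syndrome_add, syndrome_eWord, fm_add_self]
    by_cases hyD : ∃ ι : Idx m, ι.val ∈ C ∧ (syndrome y = 0 ∧ pcond ι y)
    · obtain ⟨ι, hιC, hsy, hpy⟩ := hyD
      by_cases hιs : ι.val = syndrome x
      · have hιeq : ι = sι := Subtype.ext hιs
        have hxy : y + eWord ι = x := by
          rw [hιeq, hy, fn_add_add]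
        refine ⟨x, ?_, by rw [hammingDist_self]; omega⟩
        apply Set.mem_union_right
        simp only [Set.mem_iUnion]
        refine ⟨ι, hιC, mem_D'_iff.mpr ⟨hιs.symm ▸ rfl, ?_⟩⟩
        · rw [← hxy]
          exact pcond_add hpy (fun δ h0 hι => coord_eWord_vanish h0 hι)
      · have hsιne : syndrome x + ι.val ≠ 0 := by
          intro h
          exact hιs (fm_cancel h).symm
        refine ⟨x + eWord ⟨syndrome x + ι.val, hsιne⟩, ?_,
          le_of_eq (dist_add_eWord x _)⟩
        apply Set.mem_union_right
        simp only [Set.mem_iUnion]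
        refine ⟨ι, hιC, mem_D'_iff.mpr ⟨?_, ?_⟩⟩
        · rw [syndrome_add, syndrome_eWord]
          show syndrome x + (syndrome x + ι.val) = ι.val
          rw [← add_assoc, fm_add_self, zero_add]
        · have hxe : x + eWord ⟨syndrome x + ι.val, hsιne⟩
              = y + (eWord sι + eWord ⟨syndrome x + ι.val, hsιne⟩) := by
            rw [hy, add_assoc, ← add_assoc (eWord sι), fn_add_self, zero_add]
          rw [hxe]
          apply pcond_add hpy
          intro δ h0 hι
          apply pair_small (ι := ι) ?_ (supp_pair_card sι _) h0 hι
          rw [syndrome_add, syndrome_eWord, syndrome_eWord]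
          show syndrome x + (syndrome x + ι.val) = ι.val
          rw [← add_assoc, fm_add_self, zero_add]
    · refine ⟨y, ?_, ?_⟩
      · apply Set.mem_union_left
        refine ⟨mem_hammingCode_iff.mpr hys, ?_⟩
        simp only [Set.mem_iUnion, not_exists]
        intro ι hιC hmem
        exact hyD ⟨ι, hιC, mem_D_iff.mp hmem⟩
      · exact le_of_eq (dist_add_eWord x sι)


variable {m : ℕ}

lemma fm_dist_pair (v u : Fm m) : hammingDist v u = hammingDist (v + u) (0 : Fm m) := by
  show (Finset.univ.filter fun t => v t ≠ u t).card
      = (Finset.univ.filter fun t => (v + u) t ≠ (0 : Fm m) t).card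
  congr 1
  apply Finset.filter_congr
  intro t _
  show (v t ≠ u t) ↔ ((v + u) t ≠ (0 : Fm m) t)
  simpa using z2_ne_iff (v t) (u t)

lemma code (C : Set (Fm m)) (hC : IsOneCode C) (h0 : (0 : Fm m) ∈ C) :
    IsOneCode (PofC C) := by
  intro a ha b hb hne
  by_contra hlt
  push_neg at hlt
  have hd : hammingDist a b ≤ 2 := by omega
  rcases ha with ⟨haH, haN⟩ | haU
  · simp only [Set.mem_iUnion, not_exists] at haN
    rcases hb with ⟨hbH, hbN⟩ | hbU
    · exact codeAA (mem_hammingCode_iff.mp haH) (mem_hammingCode_iff.mp hbH) hne hd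
    · simp only [Set.mem_iUnion] at hbU
      obtain ⟨ι, hιC, hbD⟩ := hbU
      rw [mem_D'_iff] at hbD
      exact codeAB (mem_hammingCode_iff.mp haH)
        (fun hc => haN ι hιC (mem_D_iff.mpr hc)) hbD hd
  · simp only [Set.mem_iUnion] at haU
    obtain ⟨ι, hιC, haD⟩ := haU
    rw [mem_D'_iff] at haD
    rcases hb with ⟨hbH, hbN⟩ | hbU
    · simp only [Set.mem_iUnion, not_exists] at hbN
      exact codeAB (mem_hammingCode_iff.mp hbH)
        (fun hc => hbN ι hιC (mem_D_iff.mpr hc)) haD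
        (by rwa [hammingDist_comm])
    · simp only [Set.mem_iUnion] at hbU
      obtain ⟨κ, hκC, hbD⟩ := hbU
      rw [mem_D'_iff] at hbD
      by_cases hικ : ι = κ
      · subst hικ
        exact codeBBeq haD.1 hbD.1 hne hd
      · have h3ι : 3 ≤ hammingDist ι.val (0 : Fm m) := hC ι.val hιC 0 h0 ι.2
        have h3κ : 3 ≤ hammingDist κ.val (0 : Fm m) := hC κ.val hκC 0 h0 κ.2
        have h3γ : 3 ≤ hammingDist (ι.val + κ.val) (0 : Fm m) := by
          rw [← fm_dist_pair]
          exact hC ι.val hιC κ.val hκC (fun h => hικ (Subtype.ext h))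
        exact codeBBne hικ h3ι h3κ h3γ haD hbD hd

end S6

/-- If `C ⊆ F^m` is a 1-code with `0 ∈ C`, then `P(C)` is a
1-perfect code in `F^n`. -/
theorem stmt6 (m : ℕ) (hm : 1 ≤ m) (C : Set (Fm m)) (hC : IsOneCode C) (h0 : (0 : Fm m) ∈ C) :
    IsOnePerfect (PofC C) := by
  exact ⟨S6.code C hC h0, fun x => S6.cover C x⟩
end

section
/- Let ι ∈ F^m be nonzero and κ ∈ F^m. If ẑκ belongs to the coset R_ι + ẑι, then κ = ι. -/
lemma zhat_syndrome {m : ℕ} (α : Fm m) :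
    ∑ j : Idx m, zhat α j • (j : Fm m) = α := by
  unfold zhat
  have h1 : ∀ j : Idx m,
      (∑ i : Fin m, if (j : Fm m) = Pi.single i 1 then α i else 0) • (j : Fm m)
      = ∑ i : Fin m, (if (j : Fm m) = Pi.single i 1 then α i else 0) • (j : Fm m) := by
    intro j; exact Finset.sum_smul
  rw [Finset.sum_congr rfl (fun j _ => h1 j), Finset.sum_comm]
  have h2 : ∀ i : Fin m,
      (∑ j : Idx m, (if (j : Fm m) = Pi.single i 1 then α i else 0) • (j : Fm m))
      = α i • Pi.single i 1 := by
    intro i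
    have hne : (Pi.single i 1 : Fm m) ≠ 0 := by
      intro h0
      have := congrFun h0 i
      simp at this
    rw [Fintype.sum_eq_single (⟨Pi.single i 1, hne⟩ : Idx m)]
    · simp
    · intro j hj
      have : (j : Fm m) ≠ Pi.single i 1 := by
        intro he; apply hj; exact Subtype.ext he
      simp [this]
  rw [Finset.sum_congr rfl (fun i _ => h2 i)]
  funext k
  simp [Pi.single_apply]

/-- If `ι ∈ F^m` is nonzero and `ẑκ ∈ R_ι + ẑι`, then `κ = ι`. -/
theorem stmt9 (m : ℕ) (hm : 1 ≤ m) (ι : Idx m) (κ : Fm m)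
    (h : zhat κ ∈ coset (Rcomp ι) (zhat (ι : Fm m))) :
    κ = (ι : Fm m) := by
  obtain ⟨c, hc, heq⟩ := h
  have hc' : c = zhat κ + zhat (ι : Fm m) := by
    have : (2 : ZMod 2) = 0 := by decide
    funext j
    have := congrFun heq j
    simp only [Pi.add_apply] at this ⊢
    have key : ∀ a b k : ZMod 2, a + b = k → a = k + b := by decide
    exact key _ _ _ this
  have hsum : ∑ j : Idx m, c j • (j : Fm m) = 0 := hc.1
  rw [hc'] at hsum
  have : ∑ j : Idx m, (zhat κ + zhat (ι : Fm m)) j • (j : Fm m)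
      = κ + (ι : Fm m) := by
    have : ∀ j : Idx m, (zhat κ + zhat (ι : Fm m)) j • (j : Fm m)
        = zhat κ j • (j : Fm m) + zhat (ι : Fm m) j • (j : Fm m) := by
      intro j; simp [add_smul]
    rw [Finset.sum_congr rfl (fun j _ => this j), Finset.sum_add_distrib,
      zhat_syndrome, zhat_syndrome]
  rw [this] at hsum
  by_contra hne
  exact add_ne_zero_of_ne' hne hsum
end

section
/- For every nonzero ι ∈ F^m, the word ẑι + e^(ι) belongs to the Hamming code H; consequently, the coset R_ι + ẑι + e^(ι) is contained in H. -/
lemma hamming_add_mem {m : ℕ} {a b : Fn m} (ha : a ∈ hammingCode m)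
    (hb : b ∈ hammingCode m) : a + b ∈ hammingCode m := by
  simp only [hammingCode, Set.mem_setOf_eq] at *
  simp only [Pi.add_apply, add_smul, Finset.sum_add_distrib, ha, hb, add_zero]

lemma eWord_sum {m : ℕ} (ι : Idx m) :
    ∑ κ : Idx m, (eWord ι) κ • (κ : Fm m) = (ι : Fm m) := by
  rw [Finset.sum_eq_single ι]
  · simp [eWord]
  · intro b _ hb; simp [eWord, hb]
  · simp

lemma zhat_sum {m : ℕ} (α : Fm m) :
    ∑ κ : Idx m, (zhat α) κ • (κ : Fm m) = α := by
  unfold zhat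
  simp only [Finset.sum_smul]
  rw [Finset.sum_comm]
  have : ∀ i : Fin m, ∑ κ : Idx m,
      (if (κ : Fm m) = Pi.single i 1 then α i else 0) • (κ : Fm m)
      = Pi.single i (α i) := by
    intro i
    have hne : (Pi.single i 1 : Fm m) ≠ 0 := by
      intro h
      have := congrFun h i
      simp at this
    rw [Finset.sum_eq_single (⟨Pi.single i 1, hne⟩ : Idx m)]
    · simp only [if_pos rfl]
      ext j
      by_cases hj : j = i <;> simp [Pi.single_apply, hj, mul_comm]
    · intro b _ hb
      have : (b : Fm m) ≠ Pi.single i 1 := by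
        intro h; apply hb; exact Subtype.ext h
      simp [this]
    · simp
  rw [Finset.sum_congr rfl (fun i _ => this i)]
  ext j
  simp [Finset.sum_apply, Pi.single_apply]

/-- For every nonzero `ι ∈ F^m`, the word `ẑι + e^(ι)` belongs to `H`;
consequently, `R_ι + ẑι + e^(ι) ⊆ H`. -/
theorem stmt10 (m : ℕ) (hm : 1 ≤ m) (ι : Idx m) :
    zhat (ι : Fm m) + eWord ι ∈ hammingCode m ∧
      coset (Rcomp ι) (zhat (ι : Fm m) + eWord ι) ⊆ hammingCode m := by
  have hz : zhat (ι : Fm m) + eWord ι ∈ hammingCode m := by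
    simp only [hammingCode, Set.mem_setOf_eq, Pi.add_apply, add_smul,
      Finset.sum_add_distrib, zhat_sum, eWord_sum]
    ext j
    have : ∀ a : ZMod 2, a + a = 0 := by decide
    simp [this]
  refine ⟨hz, ?_⟩
  rintro x ⟨c, hc, rfl⟩
  exact hamming_add_mem hc.1 hz
end

section
/- Let P ⊆ F^n be a 1-perfect code containing the all-zero word, where n = 2^m − 1 and m ≥ 2. Then the supports of the weight-3 codewords of P form a Steiner triple system on the coordinate set: for any two distinct coordinates i and j, there is exactly one codeword of P of Hamming weight 3 whose support contains both i and j. -/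
/-- If `P ⊆ F^n` (`n = 2^m - 1`, `m ≥ 2`) is a 1-perfect code containing
the all-zero word, then the supports of the weight-3 codewords of `P` form a Steiner
triple system: any two distinct coordinates lie in the support of exactly one
codeword of `P` of Hamming weight 3. -/
theorem stmt16 (m : ℕ) (hm : 2 ≤ m) (P : Set (Fn m)) (hP : IsOnePerfect P)
    (h0 : (0 : Fn m) ∈ P) (i j : Idx m) (hij : i ≠ j) :
    ∃! c : Fn m, c ∈ P ∧ hammingDist c 0 = 3 ∧ c i ≠ 0 ∧ c j ≠ 0 := by
    classical
  obtain ⟨hcode, hcover⟩ := hP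
  have one2 : ∀ a : ZMod 2, a ≠ 0 → a = 1 := by decide
  set x : Fn m := fun k => if k = i then 1 else if k = j then 1 else 0 with hxdef
  have hfx : (Finset.univ.filter fun k => x k ≠ (0 : Fn m) k) = {i, j} := by
    ext k
    simp only [Finset.mem_filter, Finset.mem_univ, true_and, Finset.mem_insert,
      Finset.mem_singleton, hxdef, Pi.zero_apply]
    split_ifs with h1 h2 <;> simp_all
  have hx0 : hammingDist x 0 = 2 := by
    rw [hammingDist, hfx, Finset.card_insert_of_notMem (by simpa using hij),
      Finset.card_singleton]
  obtain ⟨c, hcP, hcx⟩ := hcover x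
  have hc0 : c ≠ 0 := by
    rintro rfl
    rw [hx0] at hcx; omega
  have h3 : 3 ≤ hammingDist c 0 := hcode c hcP 0 h0 hc0
  have htri : hammingDist c 0 ≤ hammingDist c x + hammingDist x 0 :=
    hammingDist_triangle c x 0
  rw [hammingDist_comm] at hcx
  have hw3 : hammingDist c 0 = 3 := by omega
  have hd1 : hammingDist c x = 1 := by omega
  -- the weight filter
  have hwcard : (Finset.univ.filter fun k => c k ≠ (0 : Fn m) k).card = 3 := hw3
  have hdcard : (Finset.univ.filter fun k => c k ≠ x k).card = 1 := hd1
  have hci : c i ≠ 0 := by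
    intro hci
    have hsub : (Finset.univ.filter fun k => c k ≠ (0 : Fn m) k) ⊆
        insert j (Finset.univ.filter fun k => c k ≠ x k) := by
      intro k hk
      simp only [Finset.mem_filter, Finset.mem_univ, true_and, Pi.zero_apply] at hk
      simp only [Finset.mem_insert, Finset.mem_filter, Finset.mem_univ, true_and]
      by_cases hkj : k = j
      · exact Or.inl hkj
      · refine Or.inr ?_
        by_cases hki : k = i
        · subst hki; exact absurd hci hk
        · rw [hxdef]; simpa [hki, hkj] using hk
    have h1 := Finset.card_le_card hsub
    have h2 := Finset.card_insert_le j (Finset.univ.filter fun k => c k ≠ x k)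
    omega
  have hcj : c j ≠ 0 := by
    intro hcj
    have hsub : (Finset.univ.filter fun k => c k ≠ (0 : Fn m) k) ⊆
        insert i (Finset.univ.filter fun k => c k ≠ x k) := by
      intro k hk
      simp only [Finset.mem_filter, Finset.mem_univ, true_and, Pi.zero_apply] at hk
      simp only [Finset.mem_insert, Finset.mem_filter, Finset.mem_univ, true_and]
      by_cases hki : k = i
      · exact Or.inl hki
      · refine Or.inr ?_
        by_cases hkj : k = j
        · subst hkj; exact absurd hcj hk
        · rw [hxdef]; simpa [hki, hkj] using hk
    have h1 := Finset.card_le_card hsub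
    have h2 := Finset.card_insert_le i (Finset.univ.filter fun k => c k ≠ x k)
    omega
  refine ⟨c, ⟨hcP, hw3, hci, hcj⟩, ?_⟩
  rintro c' ⟨hc'P, hw3', hc'i, hc'j⟩
  by_contra hne
  have hd := hcode c' hc'P c hcP hne
  have hAsub : ∀ (d : Fn m), d i ≠ 0 → d j ≠ 0 → hammingDist d 0 = 3 →
      ((Finset.univ.filter fun k => d k ≠ (0 : Fn m) k) \ {i, j}).card = 1 := by
    intro d hdi hdj hw
    have hijmem : ({i, j} : Finset (Idx m)) ⊆
        Finset.univ.filter fun k => d k ≠ (0 : Fn m) k := by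
      intro k hk
      simp only [Finset.mem_insert, Finset.mem_singleton] at hk
      rcases hk with rfl | rfl <;> simp [hdi, hdj]
    rw [Finset.card_sdiff_of_subset hijmem]
    have : ({i, j} : Finset (Idx m)).card = 2 := by
      rw [Finset.card_insert_of_notMem (by simpa using hij), Finset.card_singleton]
    have hw' : (Finset.univ.filter fun k => d k ≠ (0 : Fn m) k).card = 3 := hw
    omega
  have hsub : (Finset.univ.filter fun k => c' k ≠ c k) ⊆
      ((Finset.univ.filter fun k => c' k ≠ (0 : Fn m) k) \ {i, j}) ∪
      ((Finset.univ.filter fun k => c k ≠ (0 : Fn m) k) \ {i, j}) := by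
    intro k hk
    simp only [Finset.mem_filter, Finset.mem_univ, true_and] at hk
    have hki : k ≠ i := by
      rintro rfl
      rw [one2 _ hc'i, one2 _ hci] at hk
      exact hk rfl
    have hkj : k ≠ j := by
      rintro rfl
      rw [one2 _ hc'j, one2 _ hcj] at hk
      exact hk rfl
    simp only [Finset.mem_union, Finset.mem_sdiff, Finset.mem_filter, Finset.mem_univ,
      true_and, Finset.mem_insert, Finset.mem_singleton, Pi.zero_apply]
    rcases eq_or_ne (c' k) 0 with h | h
    · refine Or.inr ⟨?_, by simp [hki, hkj]⟩
      rw [h] at hk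
      exact fun e => hk e.symm
    · exact Or.inl ⟨h, by simp [hki, hkj]⟩
  have h1 := Finset.card_le_card hsub
  have h2 := Finset.card_union_le
      ((Finset.univ.filter fun k => c' k ≠ (0 : Fn m) k) \ {i, j})
      ((Finset.univ.filter fun k => c k ≠ (0 : Fn m) k) \ {i, j})
  have h3 := hAsub c' hc'i hc'j hw3'
  have h4 := hAsub c hci hcj hw3
  have hd' : 3 ≤ (Finset.filter (fun k => c' k ≠ c k) Finset.univ).card := by
    simpa [hammingDist] using hd
  omega
end
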